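/- arXiv:2206.00626 — 4 statements merged into one kernel-verified Lean document; each statement's English description precedes it below -/
import Mathlib

section
/- Let X be a Hilbert space, Xₙ ⊆ X closed subspaces with orthogonal projections pₙ satisfying pₙ x → x for all x. Let T : X → X be compact and Tₙ : Xₙ → Xₙ bounded operators satisfying the uniform convergence ‖Tₙ pₙ − pₙ T‖_{L(X, X)} → 0. Then Tₙ converges compactly to T: Tₙ converges discretely to T, and for any bounded sequence xₙ ∈ Xₙ with ‖xₙ‖ ≤ C, the sequence (Tₙ xₙ) has a subsequence that P-converges to some y ∈ X. -/
open Filter Topology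

/-!
Since `pₙ` is a contraction, `‖Tₙ v - pₙ w‖ ≤ ‖Tₙ v - pₙ T v‖ + ‖T v - w‖ ≤ εₙ ‖v‖ + ‖T v - w‖`
for `v ∈ Xₙ` and `w ∈ X`. Along a bounded sequence `vₙ` the first term tends to zero, so `Tₙ vₙ`
P-converges to `w` as soon as `T vₙ → w`. For discrete convergence `vₙ → x` in `X` and `w = T x`;
for compactness, `T` maps the bounded sequence `vₙ` to one with a convergent subsequence.
-/

theorem IsCompactOperator.exists_tendsto_subseq {𝕜₁ 𝕜₂ : Type*} [NontriviallyNormedField 𝕜₁]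
    [NontriviallyNormedField 𝕜₂] {σ₁₂ : 𝕜₁ →+* 𝕜₂} {E F : Type*} [SeminormedAddCommGroup E]
    [NormedSpace 𝕜₁ E] [SeminormedAddCommGroup F] [NormedSpace 𝕜₂ F] {f : E →SL[σ₁₂] F}
    (hf : IsCompactOperator f) {x : ℕ → E} {C : ℝ} (hx : ∀ n, ‖x n‖ ≤ C) :
    ∃ y : F, ∃ φ : ℕ → ℕ, StrictMono φ ∧ Tendsto (f ∘ x ∘ φ) atTop (𝓝 y) := by
  obtain ⟨S, hS, hfS⟩ := IsCompactOperator.image_closedBall_subset_compact (f := f.toLinearMap) hf C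
  obtain ⟨y, -, φ, hφ, hy⟩ :=
    hS.tendsto_subseq fun n => hfS ⟨x n, mem_closedBall_zero_iff.2 (hx n), rfl⟩
  exact ⟨y, φ, hφ, hy⟩

namespace Submodule

variable {𝕜 E : Type*} [RCLike 𝕜] [NormedAddCommGroup E] [InnerProductSpace 𝕜 E]

theorem norm_sub_orthogonalProjectionOnto_le (U : Submodule 𝕜 E) [U.HasOrthogonalProjection]
    (a u w : E) :
    ‖a - (U.orthogonalProjectionOnto w : E)‖ ≤
      ‖a - (U.orthogonalProjectionOnto u : E)‖ + ‖u - w‖ :=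
  calc ‖a - (U.orthogonalProjectionOnto w : E)‖
      ≤ ‖a - (U.orthogonalProjectionOnto u : E)‖ +
          ‖(U.orthogonalProjectionOnto u : E) - U.orthogonalProjectionOnto w‖ :=
        norm_sub_le_norm_sub_add_norm_sub _ _ _
    _ = ‖a - (U.orthogonalProjectionOnto u : E)‖ + ‖U.orthogonalProjectionOnto (u - w)‖ := by
        rw [map_sub]; rfl
    _ ≤ ‖a - (U.orthogonalProjectionOnto u : E)‖ + ‖u - w‖ := by
        gcongr
        exact U.norm_orthogonalProjectionOnto_apply_le _

variable {ι : Type*} {l : Filter ι} (K : ι → Submodule 𝕜 E) [∀ i, (K i).HasOrthogonalProjection]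

theorem tendsto_norm_sub_orthogonalProjectionOnto_of_approx {S : ∀ i, K i → K i} {T : E → E}
    {ε : ι → ℝ} (hε : Tendsto ε l (𝓝 0))
    (hST : ∀ i (v : K i), ‖(S i v : E) - (K i).orthogonalProjectionOnto (T v)‖ ≤ ε i * ‖(v : E)‖)
    {x : ∀ i, K i} (hx : IsBoundedUnder (· ≤ ·) l fun i => ‖(x i : E)‖) {w : ι → E}
    (hw : Tendsto (fun i => T (x i) - w i) l (𝓝 0)) :
    Tendsto (fun i => ‖(S i (x i) : E) - (K i).orthogonalProjectionOnto (w i)‖) l (𝓝 0) := by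
  have hbound : ∀ i, ‖(S i (x i) : E) - (K i).orthogonalProjectionOnto (w i)‖ ≤
      ε i * ‖(x i : E)‖ + ‖T (x i) - w i‖ := fun i =>
    ((K i).norm_sub_orthogonalProjectionOnto_le _ (T (x i)) _).trans (by gcongr; exact hST i (x i))
  have hlim : Tendsto (fun i => ε i * ‖(x i : E)‖ + ‖T (x i) - w i‖) l (𝓝 0) := by
    simpa using (hε.zero_mul_isBoundedUnder_le (by simpa [Function.comp_def] using hx)).add hw.norm
  exact squeeze_zero (fun _ => norm_nonneg _) hbound hlim

end Submodule

theorem uniform_convergence_implies_compact_convergence_general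
    {X : Type*} [NormedAddCommGroup X] [InnerProductSpace ℂ X]
    (K : ℕ → Submodule ℂ X) [∀ n, Submodule.HasOrthogonalProjection (K n)]
    (happrox : ∀ x : X,
      Tendsto (fun n => ‖((Submodule.orthogonalProjectionOnto (K n) x : K n) : X) - x‖) atTop (𝓝 0))
    (T : X →L[ℂ] X) (hT : IsCompactOperator T)
    (Tn : ∀ n, (K n) →L[ℂ] (K n))
    (hunif : ∃ ε : ℕ → ℝ, Tendsto ε atTop (𝓝 0) ∧ ∀ (n : ℕ) (x : X),
      ‖((Tn n (Submodule.orthogonalProjectionOnto (K n) x) : K n) : X) -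
        ((Submodule.orthogonalProjectionOnto (K n) (T x) : K n) : X)‖ ≤ ε n * ‖x‖) :
    (∀ (x₀ : X) (x : ∀ n, K n),
      Tendsto (fun n => ‖(x n : X) - ((Submodule.orthogonalProjectionOnto (K n) x₀ : K n) : X)‖) atTop (𝓝 0) →
      Tendsto (fun n => ‖((Tn n (x n) : K n) : X) -
        ((Submodule.orthogonalProjectionOnto (K n) (T x₀) : K n) : X)‖) atTop (𝓝 0)) ∧
    (∀ (x : ∀ n, K n) (C : ℝ), (∀ n, ‖(x n : X)‖ ≤ C) →
      ∃ (φ : ℕ → ℕ) (y : X), StrictMono φ ∧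
        Tendsto (fun k => ‖((Tn (φ k) (x (φ k)) : K (φ k)) : X) -
          ((Submodule.orthogonalProjectionOnto (K (φ k)) y : K (φ k)) : X)‖) atTop (𝓝 0)) := by
  obtain ⟨ε, hε, hεbound⟩ := hunif
  have hTn : ∀ n (v : K n),
      ‖(Tn n v : X) - (K n).orthogonalProjectionOnto (T v)‖ ≤ ε n * ‖(v : X)‖ := fun n v => by
    simpa using hεbound n v
  refine ⟨fun x₀ x hx => ?_, fun x C hC => ?_⟩
  · have hlim : Tendsto (fun n => (x n : X)) atTop (𝓝 x₀) :=
      (tendsto_iff_norm_sub_tendsto_zero.2 (happrox x₀)).congr_dist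
        (by simpa [dist_eq_norm, norm_sub_rev] using hx)
    exact Submodule.tendsto_norm_sub_orthogonalProjectionOnto_of_approx K hε hTn
      hlim.norm.isBoundedUnder_le (by simpa using ((T.continuous.tendsto x₀).comp hlim).sub_const (T x₀))
  · obtain ⟨y, φ, hφ, hy⟩ := hT.exists_tendsto_subseq (x := fun n => (x n : X)) hC
    refine ⟨φ, y, hφ, ?_⟩
    have hy' : Tendsto (fun n => T (x n) - y) (map φ atTop) (𝓝 0) :=
      tendsto_map'_iff.2 (by rw [← sub_self y]; exact hy.sub_const y)
    exact (Submodule.tendsto_norm_sub_orthogonalProjectionOnto_of_approx K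
      (hε.mono_left hφ.tendsto_atTop) hTn (isBoundedUnder_of ⟨C, hC⟩) hy').comp tendsto_map

/-- Lemma 3.4: If `T` is compact and `Tₙ → T` uniformly
(`‖Tₙ pₙ - pₙ T‖_{L(X,X)} → 0`, expressed via a vanishing sequence of bounds), then
`Tₙ → T` compactly: `Tₙ → T` discretely, and every bounded sequence `xₙ ∈ Xₙ` yields a
subsequence of `(Tₙ xₙ)` that P-converges to some `y ∈ X`. -/
theorem uniform_convergence_implies_compact_convergence
    {X : Type*} [NormedAddCommGroup X] [InnerProductSpace ℂ X] [CompleteSpace X]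
    (K : ℕ → Submodule ℂ X) [∀ n, Submodule.HasOrthogonalProjection (K n)]
    (happrox : ∀ x : X,
      Tendsto (fun n => ‖((Submodule.orthogonalProjectionOnto (K n) x : K n) : X) - x‖) atTop (𝓝 0))
    (T : X →L[ℂ] X) (hT : IsCompactOperator T)
    (Tn : ∀ n, (K n) →L[ℂ] (K n))
    (hunif : ∃ ε : ℕ → ℝ, Tendsto ε atTop (𝓝 0) ∧ ∀ (n : ℕ) (x : X),
      ‖((Tn n (Submodule.orthogonalProjectionOnto (K n) x) : K n) : X) -
        ((Submodule.orthogonalProjectionOnto (K n) (T x) : K n) : X)‖ ≤ ε n * ‖x‖) :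
    (∀ (x₀ : X) (x : ∀ n, K n),
      Tendsto (fun n => ‖(x n : X) - ((Submodule.orthogonalProjectionOnto (K n) x₀ : K n) : X)‖) atTop (𝓝 0) →
      Tendsto (fun n => ‖((Tn n (x n) : K n) : X) -
        ((Submodule.orthogonalProjectionOnto (K n) (T x₀) : K n) : X)‖) atTop (𝓝 0)) ∧
    (∀ (x : ∀ n, K n) (C : ℝ), (∀ n, ‖(x n : X)‖ ≤ C) →
      ∃ (φ : ℕ → ℕ) (y : X), StrictMono φ ∧
        Tendsto (fun k => ‖((Tn (φ k) (x (φ k)) : K (φ k)) : X) -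
          ((Submodule.orthogonalProjectionOnto (K (φ k)) y : K (φ k)) : X)‖) atTop (𝓝 0)) :=
  uniform_convergence_implies_compact_convergence_general K happrox T hT Tn hunif
end

section
/- Let X be a Hilbert space, Xₙ ⊆ X closed subspaces with orthogonal projections pₙ satisfying pₙ x → x for all x ∈ X. Let X' be a Banach space compactly embedded in X, and suppose Tₙ : Xₙ → Xₙ are operators with Tₙ Xₙ ⊆ X' and the X'-norms ‖Tₙ xₙ‖_{X'} uniformly bounded whenever ‖xₙ‖_X ≤ C, and Tₙ converges discretely to T : X → X. Then Tₙ converges compactly to T. -/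
open Filter Topology

/-!
The discrete convergence is a hypothesis, so only the discrete compactness of `(Tₙ xₙ)` needs
an argument. A bounded sequence `xₙ` gives `Tₙ xₙ = i gₙ` with `(gₙ)` bounded in `X'`; since `i`
is compact, some subsequence of `i gₙ` converges to a `y ∈ X`, and along it `pₙ y → y` as well,
so `‖Tₙ xₙ - pₙ y‖ → 0`.
-/

theorem IsCompactOperator.exists_strictMono_tendsto_of_norm_le
    {𝕜₁ 𝕜₂ : Type*} [NontriviallyNormedField 𝕜₁] [SeminormedRing 𝕜₂] {σ₁₂ : 𝕜₁ →+* 𝕜₂}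
    {M₁ M₂ : Type*} [SeminormedAddCommGroup M₁] [NormedSpace 𝕜₁ M₁]
    [TopologicalSpace M₂] [FirstCountableTopology M₂] [AddCommMonoid M₂] [Module 𝕜₂ M₂]
    [ContinuousConstSMul 𝕜₂ M₂] {f : M₁ →ₛₗ[σ₁₂] M₂} (hf : IsCompactOperator f)
    {g : ℕ → M₁} {C : ℝ} (hg : ∀ n, ‖g n‖ ≤ C) :
    ∃ (ψ : ℕ → ℕ) (y : M₂), StrictMono ψ ∧ Tendsto (fun k => f (g (ψ k))) atTop (𝓝 y) := by
  obtain ⟨L, hL, hballL⟩ := hf.image_closedBall_subset_compact C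
  have hmem : ∀ n, f (g n) ∈ L := fun n =>
    hballL ⟨g n, mem_closedBall_zero_iff.2 (hg n), rfl⟩
  obtain ⟨y, -, ψ, hψ, hlim⟩ := hL.tendsto_subseq hmem
  exact ⟨ψ, y, hψ, hlim⟩

theorem discrete_convergence_and_compact_embedding_implies_compact_convergence_general
    {X : Type*} [NormedAddCommGroup X] [InnerProductSpace ℂ X]
    {X' : Type*} [NormedAddCommGroup X'] [NormedSpace ℂ X']
    (K : ℕ → Submodule ℂ X) [∀ n, Submodule.HasOrthogonalProjection (K n)]
    (happrox : ∀ x : X,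
      Tendsto (fun n => ‖((Submodule.orthogonalProjectionOnto (K n) x : K n) : X) - x‖) atTop (𝓝 0))
    (i : X' →L[ℂ] X) (hi : IsCompactOperator i)
    (T : X →L[ℂ] X) (Tn : ∀ n, (K n) →L[ℂ] (K n))
    -- `Tₙ Xₙ ⊆ X'` with uniform `X'`-bound on bounded sequences:
    (hrange : ∀ (x : ∀ n, K n) (C : ℝ), (∀ n, ‖(x n : X)‖ ≤ C) →
      ∃ (g : ℕ → X') (C' : ℝ), (∀ n, ((Tn n (x n) : K n) : X) = i (g n)) ∧ ∀ n, ‖g n‖ ≤ C')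
    -- discrete convergence `Tₙ → T`:
    (hdisc : ∀ (x₀ : X) (x : ∀ n, K n),
      Tendsto (fun n => ‖(x n : X) - ((Submodule.orthogonalProjectionOnto (K n) x₀ : K n) : X)‖) atTop (𝓝 0) →
      Tendsto (fun n => ‖((Tn n (x n) : K n) : X) -
        ((Submodule.orthogonalProjectionOnto (K n) (T x₀) : K n) : X)‖) atTop (𝓝 0)) :
    -- compact convergence: discrete convergence together with discrete P-compactness of images
    (∀ (x₀ : X) (x : ∀ n, K n),
      Tendsto (fun n => ‖(x n : X) - ((Submodule.orthogonalProjectionOnto (K n) x₀ : K n) : X)‖) atTop (𝓝 0) →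
      Tendsto (fun n => ‖((Tn n (x n) : K n) : X) -
        ((Submodule.orthogonalProjectionOnto (K n) (T x₀) : K n) : X)‖) atTop (𝓝 0)) ∧
    (∀ (x : ∀ n, K n) (C : ℝ), (∀ n, ‖(x n : X)‖ ≤ C) →
      ∀ φ : ℕ → ℕ, StrictMono φ →
      ∃ (ψ : ℕ → ℕ) (y : X), StrictMono ψ ∧
        Tendsto (fun k => ‖((Tn (φ (ψ k)) (x (φ (ψ k))) : K (φ (ψ k))) : X) -
          ((Submodule.orthogonalProjectionOnto (K (φ (ψ k))) y : K (φ (ψ k))) : X)‖) atTop (𝓝 0)) := by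
  refine ⟨hdisc, fun x C hx φ hφ => ?_⟩
  obtain ⟨g, C', hTg, hg⟩ := hrange x C hx
  obtain ⟨ψ, y, hψ, hiy⟩ := hi.exists_strictMono_tendsto_of_norm_le (g := g ∘ φ) fun n => hg (φ n)
  have hTy : Tendsto (fun k => ((Tn (φ (ψ k)) (x (φ (ψ k))) : K (φ (ψ k))) : X)) atTop (𝓝 y) := by
    simpa only [hTg, Function.comp_apply, ContinuousLinearMap.coe_coe] using hiy
  have hpy : Tendsto (fun k => ((Submodule.orthogonalProjectionOnto (K (φ (ψ k))) y : _) : X))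
      atTop (𝓝 y) :=
    (tendsto_iff_norm_sub_tendsto_zero.2 (happrox y)).comp (hφ.comp hψ).tendsto_atTop
  refine ⟨ψ, y, hψ, ?_⟩
  simpa using (hTy.sub hpy).norm

/-- Lemma 3.3: If `Tₙ Xₙ ⊆ X'` with `X'` compactly embedded in `X` (via `i`),
the `X'`-norms of `Tₙ xₙ` are uniformly bounded for bounded sequences `xₙ ∈ Xₙ`, and
`Tₙ → T` discretely, then `Tₙ → T` compactly. -/
theorem discrete_convergence_and_compact_embedding_implies_compact_convergence
    {X : Type*} [NormedAddCommGroup X] [InnerProductSpace ℂ X] [CompleteSpace X]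
    {X' : Type*} [NormedAddCommGroup X'] [NormedSpace ℂ X'] [CompleteSpace X']
    (K : ℕ → Submodule ℂ X) [∀ n, Submodule.HasOrthogonalProjection (K n)]
    (happrox : ∀ x : X,
      Tendsto (fun n => ‖((Submodule.orthogonalProjectionOnto (K n) x : K n) : X) - x‖) atTop (𝓝 0))
    (i : X' →L[ℂ] X) (hi : IsCompactOperator i)
    (T : X →L[ℂ] X) (Tn : ∀ n, (K n) →L[ℂ] (K n))
    -- `Tₙ Xₙ ⊆ X'` with uniform `X'`-bound on bounded sequences:
    (hrange : ∀ (x : ∀ n, K n) (C : ℝ), (∀ n, ‖(x n : X)‖ ≤ C) →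
      ∃ (g : ℕ → X') (C' : ℝ), (∀ n, ((Tn n (x n) : K n) : X) = i (g n)) ∧ ∀ n, ‖g n‖ ≤ C')
    -- discrete convergence `Tₙ → T`:
    (hdisc : ∀ (x₀ : X) (x : ∀ n, K n),
      Tendsto (fun n => ‖(x n : X) - ((Submodule.orthogonalProjectionOnto (K n) x₀ : K n) : X)‖) atTop (𝓝 0) →
      Tendsto (fun n => ‖((Tn n (x n) : K n) : X) -
        ((Submodule.orthogonalProjectionOnto (K n) (T x₀) : K n) : X)‖) atTop (𝓝 0)) :
    -- compact convergence: discrete convergence together with discrete P-compactness of images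
    (∀ (x₀ : X) (x : ∀ n, K n),
      Tendsto (fun n => ‖(x n : X) - ((Submodule.orthogonalProjectionOnto (K n) x₀ : K n) : X)‖) atTop (𝓝 0) →
      Tendsto (fun n => ‖((Tn n (x n) : K n) : X) -
        ((Submodule.orthogonalProjectionOnto (K n) (T x₀) : K n) : X)‖) atTop (𝓝 0)) ∧
    (∀ (x : ∀ n, K n) (C : ℝ), (∀ n, ‖(x n : X)‖ ≤ C) →
      ∀ φ : ℕ → ℕ, StrictMono φ →
      ∃ (ψ : ℕ → ℕ) (y : X), StrictMono ψ ∧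
        Tendsto (fun k => ‖((Tn (φ (ψ k)) (x (φ (ψ k))) : K (φ (ψ k))) : X) -
          ((Submodule.orthogonalProjectionOnto (K (φ (ψ k))) y : K (φ (ψ k))) : X)‖) atTop (𝓝 0)) :=
  discrete_convergence_and_compact_embedding_implies_compact_convergence_general K happrox i hi T Tn
    hrange hdisc
end

section
/- Let X, Y be Banach spaces, Xₙ, Yₙ approximation spaces with connecting maps pₙ, qₙ as in the discrete approximation scheme. Suppose Bₙ → B stably with B surjective onto Y, and Cₙ → C compactly (Bₙ, Cₙ ∈ L(Xₙ, Yₙ), B, C ∈ L(X, Y)). Then Aₙ := Bₙ + Cₙ converges regularly to A := B + C. -/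
open Filter Topology

section DiscreteApproximation

variable {X Y : Type*} [NormedAddCommGroup X] [NormedSpace ℂ X]
  [NormedAddCommGroup Y] [NormedSpace ℂ Y]
  {Xn Yn : ℕ → Type*} [∀ n, NormedAddCommGroup (Xn n)] [∀ n, NormedSpace ℂ (Xn n)]
  [∀ n, NormedAddCommGroup (Yn n)] [∀ n, NormedSpace ℂ (Yn n)]

/-- Discrete (P-)convergence of a sequence `x n ∈ Xₙ` to `x₀ ∈ X`. -/
def PConv (p : ∀ n, X →L[ℂ] Xn n) (x : ∀ n, Xn n) (x₀ : X) : Prop :=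
  Tendsto (fun n => ‖x n - p n x₀‖) atTop (𝓝 0)

/-- Discrete P-compactness of a sequence `x n ∈ Xₙ`. -/
def PCompact (p : ∀ n, X →L[ℂ] Xn n) (x : ∀ n, Xn n) : Prop :=
  ∀ φ : ℕ → ℕ, StrictMono φ → ∃ (ψ : ℕ → ℕ) (x₀ : X), StrictMono ψ ∧
    Tendsto (fun k => ‖x (φ (ψ k)) - p (φ (ψ k)) x₀‖) atTop (𝓝 0)

/-- Discrete (PQ-)convergence of operators `Aₙ : Xₙ → Yₙ` to `A : X → Y`. -/
def DiscConv (p : ∀ n, X →L[ℂ] Xn n) (q : ∀ n, Y →L[ℂ] Yn n)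
    (A : ∀ n, Xn n →L[ℂ] Yn n) (A₀ : X →L[ℂ] Y) : Prop :=
  ∀ (x₀ : X) (x : ∀ n, Xn n), PConv p x x₀ → PConv q (fun n => A n (x n)) (A₀ x₀)

/-- Stable convergence: discrete convergence and uniformly bounded inverses for large `n`. -/
def StableConv (p : ∀ n, X →L[ℂ] Xn n) (q : ∀ n, Y →L[ℂ] Yn n)
    (A : ∀ n, Xn n →L[ℂ] Yn n) (A₀ : X →L[ℂ] Y) : Prop :=
  DiscConv p q A A₀ ∧ ∃ (n₀ : ℕ) (B : ∀ n, Yn n →L[ℂ] Xn n) (C : ℝ), ∀ n ≥ n₀,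
    (A n).comp (B n) = ContinuousLinearMap.id ℂ (Yn n) ∧
    (B n).comp (A n) = ContinuousLinearMap.id ℂ (Xn n) ∧ ‖B n‖ ≤ C

/-- Compact convergence: discrete convergence and images of bounded sequences are Q-compact. -/
def CompactConv (p : ∀ n, X →L[ℂ] Xn n) (q : ∀ n, Y →L[ℂ] Yn n)
    (A : ∀ n, Xn n →L[ℂ] Yn n) (A₀ : X →L[ℂ] Y) : Prop :=
  DiscConv p q A A₀ ∧ ∀ (x : ∀ n, Xn n) (C : ℝ), (∀ n, ‖x n‖ ≤ C) →
    PCompact q (fun n => A n (x n))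

/-- Regular convergence. -/
def RegularConv (p : ∀ n, X →L[ℂ] Xn n) (q : ∀ n, Y →L[ℂ] Yn n)
    (A : ∀ n, Xn n →L[ℂ] Yn n) (A₀ : X →L[ℂ] Y) : Prop :=
  DiscConv p q A A₀ ∧ ∀ (x : ∀ n, Xn n) (C : ℝ), (∀ n, ‖x n‖ ≤ C) →
    PCompact q (fun n => A n (x n)) → PCompact p x

/-- Theorem 2.55 of Vainikko: if `Bₙ → B` stably with `B` surjective and
`Cₙ → C` compactly, then `Aₙ := Bₙ + Cₙ` converges regularly to `A := B + C`. -/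
theorem stable_plus_compact_implies_regular
    [CompleteSpace X] [CompleteSpace Y]
    (p : ∀ n, X →L[ℂ] Xn n) (q : ∀ n, Y →L[ℂ] Yn n)
    (hp : ∀ x : X, Tendsto (fun n => ‖p n x‖) atTop (𝓝 ‖x‖))
    (hq : ∀ y : Y, Tendsto (fun n => ‖q n y‖) atTop (𝓝 ‖y‖))
    (B : ∀ n, Xn n →L[ℂ] Yn n) (B₀ : X →L[ℂ] Y)
    (C : ∀ n, Xn n →L[ℂ] Yn n) (C₀ : X →L[ℂ] Y)
    (hB : StableConv p q B B₀) (hBsurj : Function.Surjective B₀)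
    (hC : CompactConv p q C C₀) :
    RegularConv p q (fun n => B n + C n) (B₀ + C₀) := by
  obtain ⟨hBd, n₀, R, c, hR⟩ := hB
  obtain ⟨hCd, hCc⟩ := hC
  have hc : 0 ≤ c := le_trans (norm_nonneg _) (hR n₀ le_rfl).2.2
  constructor
  · intro x₀ x hx
    have h1 := hBd x₀ x hx
    have h2 := hCd x₀ x hx
    have hsum : Tendsto (fun n => ‖B n (x n) - q n (B₀ x₀)‖ + ‖C n (x n) - q n (C₀ x₀)‖)
        atTop (𝓝 0) := by simpa using h1.add h2
    refine squeeze_zero (fun n => norm_nonneg _) (fun n => ?_) hsum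
    have : (B n + C n) (x n) - q n ((B₀ + C₀) x₀)
        = (B n (x n) - q n (B₀ x₀)) + (C n (x n) - q n (C₀ x₀)) := by
      simp only [ContinuousLinearMap.add_apply, map_add]; abel
    rw [this]
    exact norm_add_le _ _
  · intro x Cb hxb hA φ hφ
    obtain ⟨ψ1, y₀, hψ1, hy⟩ := hA φ hφ
    obtain ⟨ψ2, z₀, hψ2, hz⟩ := hCc x Cb hxb (φ ∘ ψ1) (hφ.comp hψ1)
    obtain ⟨x₀, hx₀⟩ := hBsurj (y₀ - z₀)
    refine ⟨ψ1 ∘ ψ2, x₀, hψ1.comp hψ2, ?_⟩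
    set σ : ℕ → ℕ := fun k => φ (ψ1 (ψ2 k)) with hσ
    have hσmono : StrictMono σ := hφ.comp (hψ1.comp hψ2)
    have hy' : Tendsto (fun k => ‖(B (σ k) + C (σ k)) (x (σ k)) - q (σ k) y₀‖)
        atTop (𝓝 0) := hy.comp hψ2.tendsto_atTop
    have hz' : Tendsto (fun k => ‖C (σ k) (x (σ k)) - q (σ k) z₀‖) atTop (𝓝 0) := hz
    have hBx : Tendsto (fun k => ‖B (σ k) (x (σ k)) - q (σ k) (B₀ x₀)‖) atTop (𝓝 0) := by
      have hsum : Tendsto (fun k => ‖(B (σ k) + C (σ k)) (x (σ k)) - q (σ k) y₀‖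
          + ‖C (σ k) (x (σ k)) - q (σ k) z₀‖) atTop (𝓝 0) := by simpa using hy'.add hz'
      refine squeeze_zero (fun k => norm_nonneg _) (fun k => ?_) hsum
      have : B (σ k) (x (σ k)) - q (σ k) (B₀ x₀)
          = ((B (σ k) + C (σ k)) (x (σ k)) - q (σ k) y₀)
            - (C (σ k) (x (σ k)) - q (σ k) z₀) := by
        rw [hx₀]
        simp only [ContinuousLinearMap.add_apply, map_sub]; abel
      rw [this]
      exact norm_sub_le _ _
    have hpx : PConv p (fun n => p n x₀) x₀ := by
      simp only [PConv, sub_self, norm_zero]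
      exact tendsto_const_nhds
    have hBp : Tendsto (fun n => ‖B n (p n x₀) - q n (B₀ x₀)‖) atTop (𝓝 0) :=
      hBd x₀ (fun n => p n x₀) hpx
    have hBp' : Tendsto (fun k => ‖B (σ k) (p (σ k) x₀) - q (σ k) (B₀ x₀)‖) atTop (𝓝 0) :=
      hBp.comp hσmono.tendsto_atTop
    have hg : Tendsto (fun k => c * (‖B (σ k) (x (σ k)) - q (σ k) (B₀ x₀)‖
        + ‖B (σ k) (p (σ k) x₀) - q (σ k) (B₀ x₀)‖)) atTop (𝓝 0) := by
      have := (hBx.add hBp').const_mul c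
      simpa using this
    refine squeeze_zero' (Eventually.of_forall fun k => norm_nonneg _) ?_ hg
    filter_upwards [eventually_ge_atTop n₀] with k hk
    have hkn : n₀ ≤ σ k := le_trans hk (hσmono.le_apply)
    obtain ⟨hBR, hRB, hnorm⟩ := hR (σ k) hkn
    set v := x (σ k) - p (σ k) x₀ with hv
    have hvR : R (σ k) (B (σ k) v) = v := by
      rw [← ContinuousLinearMap.comp_apply, hRB]; rfl
    calc ‖v‖ = ‖R (σ k) (B (σ k) v)‖ := by rw [hvR]
      _ ≤ ‖R (σ k)‖ * ‖B (σ k) v‖ := (R (σ k)).le_opNorm _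
      _ ≤ c * ‖B (σ k) v‖ := by
          exact mul_le_mul_of_nonneg_right hnorm (norm_nonneg _)
      _ ≤ c * (‖B (σ k) (x (σ k)) - q (σ k) (B₀ x₀)‖
            + ‖B (σ k) (p (σ k) x₀) - q (σ k) (B₀ x₀)‖) := by
          refine mul_le_mul_of_nonneg_left ?_ hc
          have : B (σ k) v = (B (σ k) (x (σ k)) - q (σ k) (B₀ x₀))
              - (B (σ k) (p (σ k) x₀) - q (σ k) (B₀ x₀)) := by
            rw [hv, map_sub]; abel
          rw [this]
          exact norm_sub_le _ _


end DiscreteApproximation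
end

section
/- Let Xₙ, X be Banach spaces with pₙ ∈ L(X, Xₙ) surjective, and suppose there is a constant b such that for all xₙ ∈ Xₙ, inf{‖x‖_X : pₙ x = xₙ} ≤ b‖xₙ‖. If Aₙ ∈ L(Xₙ, Yₙ) and A ∈ L(X, Y) satisfy ‖Aₙ pₙ x − qₙ A x‖ → 0 for every x ∈ X, then the operator norms ‖Aₙ‖ are uniformly bounded in n. -/
/-!
Since `pₙ` is onto with bounded lifts, it suffices to bound `Aₙ pₙ` uniformly: then
`‖Aₙ xₙ‖ ≤ C ‖x‖` for every lift `x` of `xₙ`, hence `‖Aₙ xₙ‖ ≤ C b ‖xₙ‖`. The operators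
`Aₙ pₙ : X → Yₙ` are pointwise bounded because `‖Aₙ pₙ x‖ ≤ ‖Aₙ pₙ x - qₙ A x‖ + ‖qₙ A x‖`
converges, so Banach–Steinhaus applies; the codomains vary with `n`, so we run it through the
supremum of the seminorms `x ↦ ‖Aₙ pₙ x‖`, which is continuous since Banach spaces are barrelled.
-/

open Filter Topology

theorem banach_steinhaus_pi {𝕜 E ι : Type*} {F : ι → Type*} [NontriviallyNormedField 𝕜]
    [NormedAddCommGroup E] [NormedSpace 𝕜 E] [CompleteSpace E]
    [∀ i, SeminormedAddCommGroup (F i)] [∀ i, NormedSpace 𝕜 (F i)]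
    {g : ∀ i, E →L[𝕜] F i} (h : ∀ x, ∃ C, ∀ i, ‖g i x‖ ≤ C) :
    ∃ C, 0 < C ∧ ∀ i x, ‖g i x‖ ≤ C * ‖x‖ := by
  let s : ι → Seminorm 𝕜 E := fun i ↦ (normSeminorm 𝕜 (F i)).comp (g i).toLinearMap
  have hbdd : BddAbove (Set.range s) := by
    rw [Seminorm.bddAbove_range_iff]
    intro x
    obtain ⟨C, hC⟩ := h x
    exact ⟨C, Set.forall_mem_range.2 hC⟩
  have hcont : Continuous ⇑(⨆ i, s i) := by
    rw [Seminorm.coe_iSup_eq hbdd]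
    exact Seminorm.continuous_iSup s (fun i ↦ (g i).continuous.norm) hbdd
  obtain ⟨C, hC, hbound⟩ := Seminorm.bound_of_continuous_normedSpace _ hcont
  refine ⟨C, hC, fun i x ↦ le_trans ?_ (hbound x)⟩
  rw [Seminorm.coe_iSup_eq hbdd, iSup_apply]
  exact le_ciSup (f := fun i ↦ s i x) ((Seminorm.bddAbove_range_iff.1 hbdd) x) i

theorem norm_le_mul_sInf_norm_fiber {E G F : Type*} [Norm E] [Norm F] {p : E → G} {S : G → F}
    {C : ℝ} (hC : 0 ≤ C) (hS : ∀ x, ‖S (p x)‖ ≤ C * ‖x‖) {y : G} (hy : y ∈ Set.range p) :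
    ‖S y‖ ≤ C * sInf {c : ℝ | ∃ x, p x = y ∧ ‖x‖ = c} := by
  obtain ⟨x₀, hx₀⟩ := hy
  rw [← smul_eq_mul, ← Real.sInf_smul_of_nonneg hC]
  refine le_csInf ⟨C * ‖x₀‖, ‖x₀‖, ⟨x₀, hx₀, rfl⟩, rfl⟩ ?_
  rintro _ ⟨_, ⟨x, rfl, rfl⟩, rfl⟩
  exact hS x

theorem uniform_boundedness_from_pointwise_convergence_general
    {X Y : Type*} [NormedAddCommGroup X] [NormedSpace ℂ X] [CompleteSpace X]
    [NormedAddCommGroup Y] [NormedSpace ℂ Y]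
    {Xn Yn : ℕ → Type*} [∀ n, NormedAddCommGroup (Xn n)] [∀ n, NormedSpace ℂ (Xn n)]
    [∀ n, NormedAddCommGroup (Yn n)] [∀ n, NormedSpace ℂ (Yn n)]
    (p : ∀ n, X →L[ℂ] Xn n) (q : ∀ n, Y →L[ℂ] Yn n)
    (hq : ∀ y : Y, Tendsto (fun n => ‖q n y‖) atTop (𝓝 ‖y‖))
    (hsurj : ∀ n, Function.Surjective (p n))
    (b : ℝ)
    (hlift : ∀ (n : ℕ) (xn : Xn n),
      sInf {c : ℝ | ∃ x : X, p n x = xn ∧ ‖x‖ = c} ≤ b * ‖xn‖)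
    (A : ∀ n, Xn n →L[ℂ] Yn n) (A₀ : X →L[ℂ] Y)
    (hpt : ∀ x : X, Tendsto (fun n => ‖A n (p n x) - q n (A₀ x)‖) atTop (𝓝 0)) :
    ∃ C : ℝ, ∀ n, ‖A n‖ ≤ C := by
  obtain ⟨C, hC, hbound⟩ := banach_steinhaus_pi (g := fun n ↦ (A n).comp (p n)) fun x ↦ by
    obtain ⟨M, hM⟩ := ((hq (A₀ x)).add (hpt x)).bddAbove_range
    exact ⟨M, fun n ↦ (norm_le_norm_add_norm_sub' _ _).trans (hM ⟨n, rfl⟩)⟩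
  refine ⟨max (C * b) 0, fun n ↦ (A n).opNorm_le_bound (le_max_right _ _) fun xn ↦ ?_⟩
  calc ‖A n xn‖ ≤ C * sInf {c : ℝ | ∃ x : X, p n x = xn ∧ ‖x‖ = c} :=
        norm_le_mul_sInf_norm_fiber (S := A n) hC.le (hbound n) (hsurj n xn)
    _ ≤ C * (b * ‖xn‖) := by gcongr; exact hlift n xn
    _ ≤ max (C * b) 0 * ‖xn‖ := by rw [← mul_assoc]; gcongr; exact le_max_left _ _

/-- Theorem 2.5: with `pₙ` surjective and the lifting condition
`inf{‖x‖ : pₙ x = xₙ} ≤ b ‖xₙ‖`, pointwise convergence `‖Aₙ pₙ x - qₙ A x‖ → 0` for every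
`x ∈ X` implies uniform boundedness of the operator norms `‖Aₙ‖`. -/
theorem uniform_boundedness_from_pointwise_convergence
    {X Y : Type*} [NormedAddCommGroup X] [NormedSpace ℂ X] [CompleteSpace X]
    [NormedAddCommGroup Y] [NormedSpace ℂ Y] [CompleteSpace Y]
    {Xn Yn : ℕ → Type*} [∀ n, NormedAddCommGroup (Xn n)] [∀ n, NormedSpace ℂ (Xn n)]
    [∀ n, NormedAddCommGroup (Yn n)] [∀ n, NormedSpace ℂ (Yn n)]
    (p : ∀ n, X →L[ℂ] Xn n) (q : ∀ n, Y →L[ℂ] Yn n)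
    (hq : ∀ y : Y, Tendsto (fun n => ‖q n y‖) atTop (𝓝 ‖y‖))
    (hsurj : ∀ n, Function.Surjective (p n))
    (b : ℝ)
    (hlift : ∀ (n : ℕ) (xn : Xn n),
      sInf {c : ℝ | ∃ x : X, p n x = xn ∧ ‖x‖ = c} ≤ b * ‖xn‖)
    (A : ∀ n, Xn n →L[ℂ] Yn n) (A₀ : X →L[ℂ] Y)
    (hpt : ∀ x : X, Tendsto (fun n => ‖A n (p n x) - q n (A₀ x)‖) atTop (𝓝 0)) :
    ∃ C : ℝ, ∀ n, ‖A n‖ ≤ C :=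
  uniform_boundedness_from_pointwise_convergence_general p q hq hsurj b hlift A A₀ hpt
end
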